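/- arXiv:1711.00821 — 3 statements merged into one kernel-verified Lean document; each statement's English description precedes it below -/
import Mathlib

section
/- Let G be a connected weighted graph whose minimum spanning tree has all edges of weight 1, and let S be a subgraph of G containing the MST. Suppose the vertices of S are partitioned into clusters, each cluster being a connected subgraph of diameter at least 1. For any path P in the graph obtained by contracting each cluster to a single vertex, where the edges of P are MST edges (each of weight 1), the diameter of the subgraph of G formed by the clusters of P together with the MST edges of P is at most twice the sum of the diameters of the clusters in P. -/
open scoped ENNReal

/-- The weight of a walk: the sum of the weights of its edges. -/
noncomputable def walkWeight {V : Type} (w : Sym2 V → ℝ≥0∞) {G : SimpleGraph V} {x y : V}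
    (p : G.Walk x y) : ℝ≥0∞ :=
  (p.edges.map w).sum

/-- Shortest-path distance in a weighted graph (`⊤` if there is no walk). -/
noncomputable def wdist {V : Type} (G : SimpleGraph V) (w : Sym2 V → ℝ≥0∞) (x y : V) : ℝ≥0∞ :=
  ⨅ p : G.Walk x y, walkWeight w p

/-- Diameter of the subgraph of `G` induced on the vertex set `A` (shortest paths within `A`). -/
noncomputable def setDiam {V : Type} (G : SimpleGraph V) (w : Sym2 V → ℝ≥0∞) (A : Set V) :
    ℝ≥0∞ :=
  ⨆ x : A, ⨆ y : A, wdist (G.induce A) (fun e => w (Sym2.map Subtype.val e)) x y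

/-- Diameter of a subgraph `H` measured over the vertex set `A` (paths may use all of `H`). -/
noncomputable def diamOn {V : Type} (H : SimpleGraph V) (w : Sym2 V → ℝ≥0∞) (A : Set V) :
    ℝ≥0∞ :=
  ⨆ x ∈ A, ⨆ y ∈ A, wdist H w x y

/-!
Walk from `x ∈ C a` to `y ∈ C b` (`a ≤ b`) cluster by cluster: since `H` contains every
cluster's induced subgraph, crossing `C i` costs at most `diam (C i)`, and each joining edge
costs `1 ≤ diam (C (i + 1))`. Every cluster is charged at most twice.
-/

namespace SimpleGraph

variable {V : Type} {G H : SimpleGraph V} (w : Sym2 V → ℝ≥0∞)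

theorem wdist_le_walkWeight {x y : V} (p : G.Walk x y) : wdist G w x y ≤ walkWeight w p :=
  iInf_le _ p

theorem walkWeight_append {x y z : V} (p : G.Walk x y) (q : G.Walk y z) :
    walkWeight w (p.append q) = walkWeight w p + walkWeight w q := by
  simp [walkWeight, Walk.edges_append]

theorem walkWeight_reverse {x y : V} (p : G.Walk x y) :
    walkWeight w p.reverse = walkWeight w p := by
  simp [walkWeight, Walk.edges_reverse, List.sum_reverse]

theorem walkWeight_map {W : Type} {G' : SimpleGraph W} (f : G →g G') {x y : V} (p : G.Walk x y)
    (w : Sym2 W → ℝ≥0∞) : walkWeight w (p.map f) = walkWeight (fun e => w (e.map f)) p := by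
  simp only [walkWeight, Walk.edges_map, List.map_map]
  rfl

theorem wdist_triangle (x y z : V) : wdist G w x z ≤ wdist G w x y + wdist G w y z := by
  simp only [wdist, ENNReal.iInf_add, ENNReal.add_iInf]
  exact le_iInf₂ fun q p => (wdist_le_walkWeight w (p.append q)).trans_eq
    (walkWeight_append w p q)

theorem wdist_comm (x y : V) : wdist G w x y = wdist G w y x := by
  have h (a b : V) : wdist G w a b ≤ wdist G w b a :=
    le_iInf fun p => (wdist_le_walkWeight w p.reverse).trans_eq (walkWeight_reverse w p)
  exact le_antisymm (h x y) (h y x)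

theorem wdist_le_of_adj {x y : V} (h : G.Adj x y) : wdist G w x y ≤ w s(x, y) :=
  (wdist_le_walkWeight w h.toWalk).trans_eq (by simp [walkWeight])

theorem wdist_map_le {W : Type} {G' : SimpleGraph W} (f : G →g G') (w : Sym2 W → ℝ≥0∞)
    (x y : V) : wdist G' w (f x) (f y) ≤ wdist G (fun e => w (e.map f)) x y :=
  le_iInf fun p => (wdist_le_walkWeight w (p.map f)).trans_eq (walkWeight_map f p w)

theorem wdist_le_setDiam {A : Set V} (hA : ∀ x ∈ A, ∀ y ∈ A, G.Adj x y → H.Adj x y)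
    {x y : V} (hx : x ∈ A) (hy : y ∈ A) : wdist H w x y ≤ setDiam G w A := by
  let f : G.induce A →g H := ⟨Subtype.val, fun {a b} hab => hA a a.2 b b.2 hab⟩
  calc wdist H w x y ≤ wdist (G.induce A) (fun e => w (e.map Subtype.val)) ⟨x, hx⟩ ⟨y, hy⟩ :=
        wdist_map_le f w ⟨x, hx⟩ ⟨y, hy⟩
    _ ≤ setDiam G w A := le_iSup₂_of_le (f := fun a b : A => _) ⟨x, hx⟩ ⟨y, hy⟩ le_rfl

section Chain

variable {k : ℕ} {C : Fin (k + 1) → Set V} {D : Fin (k + 1) → ℝ≥0∞}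
  (hC : ∀ i, ∀ x ∈ C i, ∀ y ∈ C i, wdist H w x y ≤ D i)
  (e : Fin k → V × V) (hmem : ∀ i, (e i).1 ∈ C i.castSucc ∧ (e i).2 ∈ C i.succ)
  (he : ∀ i, wdist H w (e i).1 (e i).2 ≤ D i.succ)
include hC hmem he

theorem wdist_le_two_mul_sum_Icc {a b : Fin (k + 1)} (hab : a ≤ b) {x y : V} (hx : x ∈ C a)
    (hy : y ∈ C b) : wdist H w x y ≤ 2 * ∑ i ∈ Finset.Icc a b, D i := by
  induction b using Fin.induction generalizing y with
  | zero =>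
    obtain rfl : a = 0 := nonpos_iff_eq_zero.mp hab
    simpa [two_mul] using (hC 0 x hx y hy).trans le_self_add
  | succ j ih =>
    rcases hab.eq_or_lt with rfl | hlt
    · simpa [two_mul] using (hC _ x hx y hy).trans le_self_add
    have haj : a ≤ j.castSucc := Fin.le_castSucc_iff.mpr hlt
    have hIcc : Finset.Icc a j.succ = insert j.succ (Finset.Icc a j.castSucc) := by
      rw [← Fin.orderSucc_castSucc, Finset.insert_Icc_right_eq_Icc_succ]
      exact haj.trans (Order.le_succ _)
    have hnotMem : j.succ ∉ Finset.Icc a j.castSucc := by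
      simp
    calc wdist H w x y
        ≤ wdist H w x (e j).1 + wdist H w (e j).1 (e j).2 + wdist H w (e j).2 y :=
          (wdist_triangle w _ (e j).2 _).trans (add_le_add_left (wdist_triangle w _ _ _) _)
      _ ≤ 2 * ∑ i ∈ Finset.Icc a j.castSucc, D i + D j.succ + D j.succ :=
          add_le_add (add_le_add (ih haj (hmem j).1) (he j)) (hC _ _ (hmem j).2 y hy)
      _ = 2 * ∑ i ∈ Finset.Icc a j.succ, D i := by
          rw [hIcc, Finset.sum_insert hnotMem]
          ring

theorem diamOn_iUnion_le_two_mul_sum : diamOn H w (⋃ i, C i) ≤ 2 * ∑ i, D i := by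
  have hsum (a b : Fin (k + 1)) : 2 * ∑ i ∈ Finset.Icc a b, D i ≤ 2 * ∑ i, D i :=
    mul_le_mul_right (Finset.sum_le_sum_of_subset (Finset.subset_univ _)) 2
  refine iSup₂_le fun x hx => iSup₂_le fun y hy => ?_
  obtain ⟨a, hxa⟩ := Set.mem_iUnion.mp hx
  obtain ⟨b, hyb⟩ := Set.mem_iUnion.mp hy
  rcases le_total a b with hab | hba
  · exact (wdist_le_two_mul_sum_Icc w hC e hmem he hab hxa hyb).trans (hsum a b)
  · rw [wdist_comm]
    exact (wdist_le_two_mul_sum_Icc w hC e hmem he hba hyb hxa).trans (hsum b a)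

end Chain

end SimpleGraph

open SimpleGraph in
theorem stmt_3_general {V : Type} (G : SimpleGraph V) (w : Sym2 V → ℝ≥0∞)
    (k : ℕ) (C : Fin (k + 1) → Set V)
    (hdiam1 : ∀ i, 1 ≤ setDiam G w (C i))
    (e : Fin k → V × V)
    (hmem : ∀ i, (e i).1 ∈ C i.castSucc ∧ (e i).2 ∈ C i.succ)
    (hadj : ∀ i, G.Adj (e i).1 (e i).2)
    (hw1 : ∀ i, w s((e i).1, (e i).2) = 1)
    (H : SimpleGraph V)
    (hH : H = SimpleGraph.fromEdgeSet
        ({f | ∃ i, ∃ x ∈ C i, ∃ y ∈ C i, G.Adj x y ∧ f = s(x, y)} ∪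
          {f | ∃ i, f = s((e i).1, (e i).2)})) :
    diamOn H w (⋃ i, C i) ≤ 2 * ∑ i, setDiam G w (C i) := by
  have hcluster (i) : ∀ x ∈ C i, ∀ y ∈ C i, wdist H w x y ≤ setDiam G w (C i) :=
    fun x hx y hy => wdist_le_setDiam w (fun a ha b hb hab => by
      rw [hH, fromEdgeSet_adj]
      exact ⟨Or.inl ⟨i, a, ha, b, hb, hab, rfl⟩, hab.ne⟩) hx hy
  have hbridge (i) : wdist H w (e i).1 (e i).2 ≤ setDiam G w (C i.succ) := by
    have hadjH : H.Adj (e i).1 (e i).2 := by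
      rw [hH, fromEdgeSet_adj]
      exact ⟨Or.inr ⟨i, rfl⟩, (hadj i).ne⟩
    exact (wdist_le_of_adj w hadjH).trans ((hw1 i).trans_le (hdiam1 i.succ))
  exact diamOn_iUnion_le_two_mul_sum w hcluster e hmem hbridge

/-- A path `P` of pairwise disjoint connected clusters `C 0, …, C k`, each of diameter at
least `1`, consecutively joined by MST edges of weight `1`: the diameter of the subgraph
formed by the clusters of `P` together with the MST edges of `P` is at most twice the sum
of the diameters of the clusters of `P`. -/
theorem stmt_3 {V : Type} (G : SimpleGraph V) (w : Sym2 V → ℝ≥0∞)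
    (k : ℕ) (C : Fin (k + 1) → Set V)
    (hdisj : ∀ i j, i ≠ j → Disjoint (C i) (C j))
    (hconn : ∀ i, (G.induce (C i)).Connected)
    (hdiam1 : ∀ i, 1 ≤ setDiam G w (C i))
    (e : Fin k → V × V)
    (hmem : ∀ i, (e i).1 ∈ C i.castSucc ∧ (e i).2 ∈ C i.succ)
    (hadj : ∀ i, G.Adj (e i).1 (e i).2)
    (hw1 : ∀ i, w s((e i).1, (e i).2) = 1)
    (H : SimpleGraph V)
    (hH : H = SimpleGraph.fromEdgeSet
        ({f | ∃ i, ∃ x ∈ C i, ∃ y ∈ C i, G.Adj x y ∧ f = s(x, y)} ∪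
          {f | ∃ i, f = s((e i).1, (e i).2)})) :
    diamOn H w (⋃ i, C i) ≤ 2 * ∑ i, setDiam G w (C i) :=
  stmt_3_general G w k C hdiam1 e hmem hadj hw1 H hH
end

section
/- Let F be a forest on n nodes where each node has weight (diameter) at least 1, and suppose some tree T in F has a path whose total node weight is at least 2ℓ and T contains a vertex of degree at least 3. Then there exists a minimal subtree C of T containing a branching vertex X and all of X's neighbors such that the total node weight of some path in C is at least 2ℓ, and moreover every path in C has total node weight at most 2ℓ + w_max, where w_max is the maximum node weight. -/
/-!
Take a set `S` of vertices that is minimal among those inducing a connected subgraph, containing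
the branching vertex `X` with all its neighbours, and carrying a path of weight at least `2ℓ`.
If some path in `S` weighed more than `2ℓ + wmax`, a longest such path would end in leaves of
the subtree `S`. Its weight exceeds `3 wmax`, so it has at least four vertices; as `X` has at
least two neighbours, neither end is `X`, and by uniqueness of paths in a tree one end `e` is not
adjacent to `X`.
Removing the leaf `e` keeps `S \ {e}` connected, keeps `X` and its neighbours, and the path
without `e` still weighs at least `2ℓ + wmax - wmax = 2ℓ`, contradicting minimality.
-/

namespace SimpleGraph.Walk

variable {V : Type*} {G : SimpleGraph V} {u v : V}

/-- The effective diameter of a path whose vertices carry the weights `w`. -/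
def nodeWeight (w : V → ℝ) (p : G.Walk u v) : ℝ := (p.support.map w).sum

variable (w : V → ℝ)

@[simp]
theorem nodeWeight_cons {x : V} (h : G.Adj x u) (p : G.Walk u v) :
    (cons h p).nodeWeight w = w x + p.nodeWeight w := by
  simp [nodeWeight]

@[simp]
theorem nodeWeight_reverse (p : G.Walk u v) : p.reverse.nodeWeight w = p.nodeWeight w := by
  simp [nodeWeight]

theorem nodeWeight_le_mul {wmax : ℝ} (hw : ∀ v, w v ≤ wmax) (p : G.Walk u v) :
    p.nodeWeight w ≤ (p.length + 1) * wmax := by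
  simpa [nodeWeight] using List.sum_le_card_nsmul (p.support.map w) wmax (by simp [hw])

theorem nodeWeight_map {V' : Type*} {G' : SimpleGraph V'} (f : G →g G') (w : V' → ℝ)
    (p : G.Walk u v) : (p.map f).nodeWeight w = p.nodeWeight (w ∘ f) := by
  simp [nodeWeight]

theorem nodeWeight_induce {s : Set V} (p : G.Walk u v) (hp : ∀ x ∈ p.support, x ∈ s) :
    (p.induce s hp).nodeWeight (fun x => w x.1) = p.nodeWeight w := by
  conv_rhs => rw [nodeWeight, ← List.attachWith_map_subtype_val hp, List.map_map]
  rw [nodeWeight, support_induce]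
  rfl

end SimpleGraph.Walk

namespace SimpleGraph

variable {V : Type*} {G : SimpleGraph V} {w : V → ℝ}

open Walk

theorem exists_isPath_neighborSet_subset_support [Finite V] (hw : ∀ v, 0 ≤ w v) {c : ℝ}
    {u₀ v₀ : V} (p₀ : G.Walk u₀ v₀) (hp₀ : p₀.IsPath) (hc : c < p₀.nodeWeight w) :
    ∃ (u v : V) (p : G.Walk u v), p.IsPath ∧ c < p.nodeWeight w ∧
      G.neighborSet u ⊆ {x | x ∈ p.support} ∧ G.neighborSet v ⊆ {x | x ∈ p.support} := by
  classical
  have := Fintype.ofFinite V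
  obtain ⟨⟨u, v, p, hp⟩, hpc, hmax⟩ :=
    (Finset.univ.filter fun q : Σ u v, G.Path u v => c < q.2.2.1.nodeWeight w).exists_max_image
      (fun q => q.2.2.1.length) ⟨⟨u₀, v₀, p₀, hp₀⟩, by simpa using hc⟩
  simp only [Finset.mem_filter, Finset.mem_univ, true_and] at hpc hmax
  -- a longest heavy path cannot be extended by a vertex off it
  have hend : ∀ {a b : V} (q : G.Walk a b), q.IsPath → c < q.nodeWeight w →
      q.length = p.length → G.neighborSet a ⊆ {x | x ∈ q.support} := by
    intro a b q hq hqc hlen z hz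
    by_contra hzq
    have := hmax ⟨z, b, q.cons (G.adj_symm hz), (cons_isPath_iff _ _).2 ⟨hq, hzq⟩⟩
      (by simp only [nodeWeight_cons]; linarith [hw z])
    simp [hlen] at this
  refine ⟨u, v, p, hp, hpc, hend p hp hpc rfl, ?_⟩
  simpa using hend p.reverse hp.reverse (by simpa using hpc) (by simp)

theorem IsAcyclic.neighborSet_subsingleton_of_subset_support (hG : G.IsAcyclic) {u v : V}
    {p : G.Walk u v} (hp : p.IsPath) (hu : G.neighborSet u ⊆ {x | x ∈ p.support}) :
    (G.neighborSet u).Subsingleton :=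
  fun _ ha _ hb => (hG.eq_snd_of_adj_start hp ha (hu ha)).trans
    (hG.eq_snd_of_adj_start hp hb (hu hb)).symm

theorem IsAcyclic.length_le_two_of_adj_of_adj (hG : G.IsAcyclic) {u v x : V}
    {p : G.Walk u v} (hp : p.IsPath) (hu : G.Adj x u) (hv : G.Adj x v) : p.length ≤ 2 := by
  by_cases huv : u = v
  · subst huv
    simp [length_eq_zero_iff.2 (isPath_iff_nil.1 hp)]
  have hpath : (cons hu.symm (cons hv nil)).IsPath := by
    simp [hu.ne.symm, hv.ne, huv]
  obtain rfl : p = _ := congrArg Subtype.val ((hG.subsingleton_path u v).elim ⟨p, hp⟩ ⟨_, hpath⟩)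
  simp

theorem Walk.IsPath.exists_isPath_notMem_le_nodeWeight {wmax c : ℝ} (hw : ∀ v, w v ≤ wmax)
    {u v : V} {p : G.Walk u v} (hp : p.IsPath) (hne : u ≠ v) (hc : c + wmax < p.nodeWeight w) :
    ∃ (a b : V) (r : G.Walk a b), r.IsPath ∧ u ∉ r.support ∧ c ≤ r.nodeWeight w := by
  cases p with
  | nil => exact absurd rfl hne
  | cons h r =>
    rw [cons_isPath_iff] at hp
    rw [nodeWeight_cons] at hc
    exact ⟨_, _, r, hp.1, hp.2, by linarith [hw u]⟩

theorem IsAcyclic.exists_leaf_not_adj_of_nodeWeight_lt [Finite V] (hG : G.IsAcyclic)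
    {wmax c : ℝ} (hw0 : ∀ v, 0 ≤ w v) (hw : ∀ v, w v ≤ wmax) (hc : 2 * wmax ≤ c) {x : V}
    (hx : (G.neighborSet x).Nontrivial) {u₀ v₀ : V} (p₀ : G.Walk u₀ v₀) (hp₀ : p₀.IsPath)
    (hheavy : c + wmax < p₀.nodeWeight w) :
    ∃ e, (G.neighborSet e).Subsingleton ∧ e ≠ x ∧ ¬G.Adj x e ∧
      ∃ (a b : V) (r : G.Walk a b), r.IsPath ∧ e ∉ r.support ∧ c ≤ r.nodeWeight w := by
  obtain ⟨u, v, p, hp, hpc, hu, hv⟩ := exists_isPath_neighborSet_subset_support hw0 p₀ hp₀ hheavy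
  have hu' := hG.neighborSet_subsingleton_of_subset_support hp hu
  have hv' := hG.neighborSet_subsingleton_of_subset_support hp.reverse (by simpa using hv)
  have hlen : 2 < p.length := by
    have hwp := nodeWeight_le_mul w hw p
    have : 0 ≤ wmax := (hw0 u).trans (hw u)
    by_contra! h
    have : (p.length : ℝ) ≤ 2 := by exact_mod_cast h
    nlinarith
  have huv : u ≠ v := by
    rintro rfl
    simp [length_eq_zero_iff.2 (isPath_iff_nil.1 hp)] at hlen
  have hne : ∀ {e}, (G.neighborSet e).Subsingleton → e ≠ x :=
    fun he h => hx.not_subsingleton (h ▸ he)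
  by_cases hxu : G.Adj x u
  · have hxv : ¬G.Adj x v := fun hxv => (hG.length_le_two_of_adj_of_adj hp hxu hxv).not_gt hlen
    exact ⟨v, hv', hne hv', hxv,
      hp.reverse.exists_isPath_notMem_le_nodeWeight hw huv.symm (by simpa using hpc)⟩
  · exact ⟨u, hu', hne hu', hxu, hp.exists_isPath_notMem_le_nodeWeight hw huv hpc⟩

theorem Preconnected.induce_of_subsingleton_neighborSet {s t : Set V} (hts : t ⊆ s)
    (hs : (G.induce s).Preconnected)
    (hleaf : ∀ v : s, v.1 ∉ t → ((G.induce s).neighborSet v).Subsingleton) :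
    (G.induce t).Preconnected := by
  refine (hs.induce_of_degree_eq_one (s := {v | v.1 ∈ t}) hleaf).map
    ⟨fun v => ⟨v.1.1, v.2⟩, fun h => h⟩ ?_
  rintro ⟨v, hv⟩
  exact ⟨⟨⟨v, hts hv⟩, hv⟩, rfl⟩

theorem Walk.IsPath.induce {s : Set V} {u v : V} {p : G.Walk u v} (hp : p.IsPath)
    (hs : ∀ x ∈ p.support, x ∈ s) : (p.induce s hs).IsPath :=
  IsPath.of_map (f := (Embedding.induce s).toHom) (by rwa [map_induce])

theorem Walk.IsPath.exists_induce_of_forall_mem {s t : Set V} {a b : s}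
    {r : (G.induce s).Walk a b} (hr : r.IsPath) (hrt : ∀ v ∈ r.support, v.1 ∈ t) :
    ∃ (x y : t) (q : (G.induce t).Walk x y), q.IsPath ∧
      q.nodeWeight (fun v => w v.1) = r.nodeWeight (fun v => w v.1) := by
  have hr' : ∀ v ∈ (r.map (Embedding.induce s).toHom).support, v ∈ t := by
    intro v hv
    obtain ⟨v, hvr, rfl⟩ := List.mem_map.1 (support_map _ r ▸ hv)
    exact hrt v hvr
  exact ⟨_, _, _, (hr.map Subtype.val_injective).induce hr', by
    rw [nodeWeight_induce, nodeWeight_map]; rfl⟩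

def IsHeavyTreeAround (G : SimpleGraph V) (w : V → ℝ) (c : ℝ) (X : V) (S : Set V) : Prop :=
  X ∈ S ∧ G.neighborSet X ⊆ S ∧ (G.induce S).Connected ∧
    ∃ (x y : S) (p : (G.induce S).Walk x y), p.IsPath ∧ c ≤ p.nodeWeight (fun v => w v.1)

theorem isHeavyTreeAround_univ (hG : G.Connected) {c : ℝ} (X : V) {u v : V} {p : G.Walk u v}
    (hp : p.IsPath) (hc : c ≤ p.nodeWeight w) : IsHeavyTreeAround G w c X Set.univ := by
  refine ⟨trivial, Set.subset_univ _, (induceUnivIso G).connected_iff.2 hG, ?_⟩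
  have hpu : ∀ x ∈ p.support, x ∈ Set.univ := fun _ _ => trivial
  exact ⟨_, _, _, hp.induce hpu, by rwa [nodeWeight_induce]⟩

theorem IsHeavyTreeAround.exists_diff_singleton [Finite V] (hG : G.IsAcyclic) {wmax c : ℝ}
    {X : V} {S : Set V} (hS : IsHeavyTreeAround G w c X S) (hw0 : ∀ v, 0 ≤ w v)
    (hw : ∀ v, w v ≤ wmax) (hc : 2 * wmax ≤ c) (hX : (G.neighborSet X).Nontrivial)
    {x y : S} {p : (G.induce S).Walk x y} (hp : p.IsPath)
    (hheavy : c + wmax < p.nodeWeight (fun v => w v.1)) :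
    ∃ e ∈ S, IsHeavyTreeAround G w c X (S \ {e}) := by
  obtain ⟨hXS, hNS, hconn, -⟩ := hS
  have hX' : ((G.induce S).neighborSet ⟨X, hXS⟩).Nontrivial := by
    obtain ⟨a, ha, b, hb, hab⟩ := hX
    exact ⟨⟨a, hNS ha⟩, ha, ⟨b, hNS hb⟩, hb, fun h => hab (congrArg Subtype.val h)⟩
  obtain ⟨e, he, heX, hXe, a, b, r, hr, her, hrc⟩ :=
    (hG.induce S).exists_leaf_not_adj_of_nodeWeight_lt (fun v => hw0 v) (fun v => hw v) hc hX'
      p hp hheavy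
  have hXe' : X ∈ S \ {e.1} :=
    ⟨hXS, fun h => heX (Subtype.ext (Set.mem_singleton_iff.1 h)).symm⟩
  have : Nonempty ↥(S \ {e.1}) := ⟨⟨X, hXe'⟩⟩
  refine ⟨e.1, e.2, hXe', fun z hz => ⟨hNS hz, ?_⟩, ⟨?_⟩, ?_⟩
  · rintro rfl
    exact hXe hz
  · refine hconn.preconnected.induce_of_subsingleton_neighborSet Set.sdiff_subset fun v hv => ?_
    obtain rfl : v = e := Subtype.ext (by by_contra h; exact hv ⟨v.2, h⟩)
    exact he
  · obtain ⟨x', y', q, hq, hqr⟩ := hr.exists_induce_of_forall_mem (w := w) (t := S \ {e.1})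
      fun v hv => ⟨v.2, fun h => her (Subtype.ext h ▸ hv)⟩
    exact ⟨x', y', q, hq, hqr ▸ hrc⟩

end SimpleGraph

open SimpleGraph

/-- Let `G` be a tree (a tree `T` of the forest `F` of ε-clusters) whose vertices carry
node weights (`ε`-cluster diameters) `nw v` with `1 ≤ nw v ≤ wmax ≤ ℓ`.  If `G` has a
path of total node weight at least `2ℓ` and a vertex of degree at least `3`, then there is
a (minimal) subtree `Cs` of `G` containing a branching vertex `X` and all of `X`'s
neighbors, such that some path of `Cs` has total node weight at least `2ℓ`, and every path
of `Cs` has total node weight at most `2ℓ + wmax`. -/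
theorem stmt_6 {V : Type} [Fintype V] (G : SimpleGraph V) (hG : G.IsTree)
    (nw : V → ℝ) (wmax ℓ : ℝ)
    (hw1 : ∀ v, 1 ≤ nw v) (hwmax : ∀ v, nw v ≤ wmax) (hwℓ : wmax ≤ ℓ)
    (hpath : ∃ (x y : V) (p : G.Walk x y), p.IsPath ∧ 2 * ℓ ≤ (p.support.map nw).sum)
    (hbranch : ∃ v : V, 3 ≤ (Set.toFinite (G.neighborSet v)).toFinset.card) :
    ∃ (X : V) (Cs : Set V),
      3 ≤ (Set.toFinite (G.neighborSet X)).toFinset.card ∧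
      X ∈ Cs ∧ G.neighborSet X ⊆ Cs ∧ (G.induce Cs).Connected ∧
      (∃ (x y : ↥Cs) (p : (G.induce Cs).Walk x y), p.IsPath ∧
        2 * ℓ ≤ (p.support.map fun v => nw v.1).sum) ∧
      (∀ (x y : ↥Cs) (p : (G.induce Cs).Walk x y), p.IsPath →
        (p.support.map fun v => nw v.1).sum ≤ 2 * ℓ + wmax) := by
  obtain ⟨X, hX3⟩ := hbranch
  obtain ⟨x, y, p, hp, hpw⟩ := hpath
  have hX : (G.neighborSet X).Nontrivial := by
    have : 1 < (Set.toFinite (G.neighborSet X)).toFinset.card := by omega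
    obtain ⟨a, ha, b, hb, hab⟩ := Finset.one_lt_card.1 this
    exact ⟨a, (Set.Finite.mem_toFinset _).1 ha, b, (Set.Finite.mem_toFinset _).1 hb, hab⟩
  obtain ⟨S, -, hSmin⟩ := exists_minimal_le_of_wellFoundedLT (IsHeavyTreeAround G nw (2 * ℓ) X)
    Set.univ (isHeavyTreeAround_univ hG.1 X hp hpw)
  obtain ⟨hXS, hNS, hconn, hheavy⟩ := hSmin.prop
  refine ⟨X, S, hX3, hXS, hNS, hconn, hheavy, fun x y q hq => ?_⟩
  by_contra! hq'
  obtain ⟨e, heS, he⟩ := hSmin.prop.exists_diff_singleton hG.2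
    (fun v => zero_le_one.trans (hw1 v)) hwmax (by linarith) hX hq hq'
  exact (hSmin.2 he Set.sdiff_subset heS).2 rfl
end

section
/- Let T be a tree with unit-weight edges, and let 𝒯 be a maximal collection of vertex-disjoint subtrees of T each of diameter d, so that deleting them leaves components (trees in 𝒯') each of diameter < d. For each tree A ∈ 𝒯, let C_A be the union of A with all trees of 𝒯' adjacent to A (connected by a single edge of T), assigning each tree of 𝒯' to exactly one neighbor in 𝒯. Then each C_A is connected and has diameter at most 3d + 2, and the clusters {C_A} together with possibly-unassigned structure partition the vertices of T. -/
/-- The (unit-weight) diameter of the subgraph of `G` induced on a finite vertex set `A`. -/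
noncomputable def fdiam {V : Type} [Fintype V] [DecidableEq V] (G : SimpleGraph V)
    (A : Finset V) : ℕ :=
  Finset.univ.sup fun p : (↑A : Set V) × (↑A : Set V) =>
    (G.induce (↑A : Set V)).dist p.1 p.2

/-!
Send every vertex to the tree of `𝒯` containing its nearest point of `⋃ 𝒯`, ties being broken by
a fixed injective rank. By maximality of `𝒯` every vertex lies within distance `d` of `⋃ 𝒯`:
otherwise the ball of radius `d` around it would be a connected set avoiding `𝒯` of diameter at
least `d`. Because ties are broken consistently, a geodesic from a vertex to its nearest point is
sent entirely to the same tree `A`; so the cell of `A` is connected, and two of its vertices are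
joined inside it by a walk that runs to `A`, through `A`, and back, of length at most `d + d + d`.
-/

namespace SimpleGraph

variable {V : Type*} {G : SimpleGraph V} {u v w : V}

lemma Walk.dist_add_dist_of_mem_support [DecidableEq V] {p : G.Walk u v}
    (hp : p.length = G.dist u v) (hw : w ∈ p.support) :
    G.dist u w + G.dist w v = G.dist u v := by
  have hsplit := p.take_spec hw
  rw [← length_eq_dist_of_subwalk hp (isSubwalk_of_append_left hsplit.symm),
    ← length_eq_dist_of_subwalk hp (isSubwalk_of_append_right hsplit.symm), ← hp,
    ← length_append, hsplit]

lemma Reachable.exists_dist_eq_of_le (huv : G.Reachable u v) {k : ℕ} (hk : k ≤ G.dist u v) :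
    ∃ w, G.dist u w = k := by
  obtain ⟨p, hp⟩ := huv.exists_walk_length_eq_dist
  refine ⟨p.getVert k, ?_⟩
  rw [← length_eq_dist_of_subwalk hp (p.isSubwalk_take k), Walk.take_length]
  omega

lemma Connected.induce_setOf_dist_le (hG : G.Connected) (v : V) (k : ℕ) :
    (G.induce {w | G.dist v w ≤ k}).Connected := by
  classical
  refine induce_connected_of_patches v (by simp) fun {w} hw => ?_
  obtain ⟨p, hp⟩ := hG.exists_walk_length_eq_dist v w
  have hsupp : {x | x ∈ p.support} ⊆ {w | G.dist v w ≤ k} := fun x hx => by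
    have := p.dist_add_dist_of_mem_support hp hx
    simp only [Set.mem_ofPred_eq] at hw ⊢
    omega
  exact ⟨_, hsupp, p.start_mem_support, p.end_mem_support,
    p.connected_induce_support.preconnected _ _⟩

lemma Reachable.dist_le_dist_induce {s : Set V} {x y : s} (h : (G.induce s).Reachable x y) :
    G.dist x y ≤ (G.induce s).dist x y := by
  obtain ⟨q, hq⟩ := h.exists_walk_length_eq_dist
  rw [← hq, ← Walk.length_map (Embedding.induce s).toHom]
  exact dist_le _


@[simp]
lemma Walk.length_induce {s : Set V} (p : G.Walk u v) (hp : ∀ x ∈ p.support, x ∈ s) :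
    (p.induce s hp).length = p.length := by
  induction p with
  | nil => rfl
  | cons h p ih => simp [ih]

end SimpleGraph

open SimpleGraph

section fdiam

variable {V : Type} [Fintype V] [DecidableEq V] {G : SimpleGraph V} {A S : Finset V}

lemma dist_induce_le_fdiam (x y : (A : Set V)) : (G.induce (A : Set V)).dist x y ≤ fdiam G A :=
  Finset.le_sup (f := fun p : (↑A : Set V) × (↑A : Set V) => (G.induce (A : Set V)).dist p.1 p.2)
    (Finset.mem_univ (x, y))

lemma fdiam_le {n : ℕ} (h : ∀ x y : (A : Set V), (G.induce (A : Set V)).dist x y ≤ n) :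
    fdiam G A ≤ n :=
  Finset.sup_le fun p _ => h p.1 p.2

lemma dist_le_fdiam (hA : (G.induce (A : Set V)).Connected) {x y : V} (hx : x ∈ A) (hy : y ∈ A) :
    G.dist x y ≤ fdiam G A :=
  ((hA ⟨x, hx⟩ ⟨y, hy⟩).dist_le_dist_induce).trans (dist_induce_le_fdiam _ _)

lemma exists_walk_induce_length_le (hAS : A ⊆ S) (hA : (G.induce (A : Set V)).Connected) {k : ℕ}
    (hS : ∀ v ∈ S, ∃ a ∈ A, ∃ p : G.Walk v a, p.length ≤ k ∧ ∀ w ∈ p.support, w ∈ S)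
    (x y : (S : Set V)) :
    ∃ q : (G.induce (S : Set V)).Walk x y, q.length ≤ k + fdiam G A + k := by
  obtain ⟨x, hx⟩ := x
  obtain ⟨y, hy⟩ := y
  obtain ⟨a, ha, px, hpx, hpxS⟩ := hS x hx
  obtain ⟨b, hb, py, hpy, hpyS⟩ := hS y hy
  obtain ⟨m, hm⟩ := (hA ⟨a, ha⟩ ⟨b, hb⟩).exists_walk_length_eq_dist
  have hmA := dist_induce_le_fdiam (G := G) ⟨a, ha⟩ ⟨b, hb⟩
  let m' : (G.induce (S : Set V)).Walk ⟨a, hAS ha⟩ ⟨b, hAS hb⟩ :=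
    m.map (G.induceHomOfLE (Finset.coe_subset.2 hAS)).toHom
  have hm' : m'.length = m.length := Walk.length_map _ _
  refine ⟨(px.induce _ hpxS).append (m'.append (py.induce _ hpyS).reverse), ?_⟩
  simp only [Walk.length_append, Walk.length_reverse, Walk.length_induce, hm']
  omega

lemma connected_and_fdiam_le_of_forall_exists_walk (hAS : A ⊆ S)
    (hA : (G.induce (A : Set V)).Connected) {k : ℕ}
    (hS : ∀ v ∈ S, ∃ a ∈ A, ∃ p : G.Walk v a, p.length ≤ k ∧ ∀ w ∈ p.support, w ∈ S) :
    (G.induce (S : Set V)).Connected ∧ fdiam G S ≤ k + fdiam G A + k := by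
  have hwalk := exists_walk_induce_length_le hAS hA hS
  refine ⟨?_, fdiam_le fun x y => ?_⟩
  · obtain ⟨a, ha⟩ := hA.nonempty
    rw [connected_iff]
    exact ⟨fun x y => (hwalk x y).elim fun q _ => q.reachable, ⟨⟨a, hAS ha⟩⟩⟩
  · obtain ⟨q, hq⟩ := hwalk x y
    exact (dist_le q).trans hq

end fdiam

section nearest

variable {V : Type*} {G : SimpleGraph V} {r : V → ℕ} {U : Finset V} {v w a b : V}

variable (G r U) in
def IsNearest (v a : V) : Prop :=
  a ∈ U ∧ ∀ b ∈ U, toLex (G.dist v a, r a) ≤ toLex (G.dist v b, r b)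

lemma exists_isNearest (hU : U.Nonempty) (v : V) : ∃ a, IsNearest G r U v a := by
  obtain ⟨a, ha, hmin⟩ := U.exists_min_image (fun b => toLex (G.dist v b, r b)) hU
  exact ⟨a, ha, hmin⟩

lemma IsNearest.dist_le (h : IsNearest G r U v a) (hb : b ∈ U) : G.dist v a ≤ G.dist v b := by
  have hab := h.2 b hb
  rw [Prod.Lex.toLex_le_toLex] at hab
  omega

lemma IsNearest.eq (hr : r.Injective) (ha : IsNearest G r U v a) (hb : IsNearest G r U v b) :
    a = b := by
  have hab := ha.2 b hb.1
  have hba := hb.2 a ha.1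
  rw [Prod.Lex.toLex_le_toLex] at hab hba
  exact hr (by omega)

lemma SimpleGraph.Connected.isNearest_self (hG : G.Connected) (ha : a ∈ U) :
    IsNearest G r U a a := by
  refine ⟨ha, fun b _ => ?_⟩
  rcases eq_or_ne a b with rfl | hab
  · exact le_rfl
  · rw [Prod.Lex.toLex_le_toLex, dist_self]
    exact Or.inl (hG.pos_dist_of_ne hab)

lemma IsNearest.of_mem_support [DecidableEq V] (hG : G.Connected) (h : IsNearest G r U v a)
    {p : G.Walk v a} (hp : p.length = G.dist v a) (hw : w ∈ p.support) :
    IsNearest G r U w a := by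
  -- moving from `v` to `w` lowers the distance to `a` by exactly `G.dist v w`, and the distance
  -- to any other `b` by at most that much
  have hsplit := p.dist_add_dist_of_mem_support hp hw
  refine ⟨h.1, fun b hb => ?_⟩
  have hvb : G.dist v b ≤ G.dist v w + G.dist w b := hG.dist_triangle
  have hab := h.2 b hb
  rw [Prod.Lex.toLex_le_toLex] at hab ⊢
  omega

end nearest

section clusters

variable {V : Type} [Fintype V] [DecidableEq V] {G : SimpleGraph V}

lemma exists_mem_dist_le_of_forall_fdiam_lt (hG : G.Connected) {U : Finset V} (hU : U.Nonempty)
    {d : ℕ} (hmax : ∀ B : Finset V, Disjoint U B → B.Nonempty →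
      (G.induce (↑B : Set V)).Connected → fdiam G B < d) (v : V) :
    ∃ a ∈ U, G.dist v a ≤ d := by
  by_contra! hfar
  set B := Finset.univ.filter fun w => G.dist v w ≤ d
  have hB : ∀ w, w ∈ B ↔ G.dist v w ≤ d := by simp [B]
  have hBconn : (G.induce (↑B : Set V)).Connected := by
    rw [Finset.coe_filter_univ]
    exact hG.induce_setOf_dist_le v d
  have hUB : Disjoint U B := Finset.disjoint_left.2 fun b hb hbB => by
    have hbfar := hfar b hb
    rw [hB] at hbB
    omega
  obtain ⟨a, ha⟩ := hU
  obtain ⟨w, hw⟩ := (hG v a).exists_dist_eq_of_le (hfar a ha).le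
  have hvB : v ∈ B := (hB v).2 (by simp)
  have hdw : G.dist v w ≤ fdiam G B := dist_le_fdiam hBconn hvB ((hB w).2 hw.le)
  have hBsmall := hmax B hUB ⟨v, hvB⟩ hBconn
  omega

def voronoiCell (near : V → V) (A : Finset V) : Finset V :=
  Finset.univ.filter fun v => near v ∈ A

@[simp]
lemma mem_voronoiCell {near : V → V} {A : Finset V} {v : V} :
    v ∈ voronoiCell near A ↔ near v ∈ A := by
  simp [voronoiCell]

lemma connected_and_fdiam_voronoiCell_le {r : V → ℕ} {U : Finset V} (hG : G.Connected)
    (hr : r.Injective) {near : V → V} (hnear : ∀ v, IsNearest G r U v (near v))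
    {A : Finset V} (hAU : A ⊆ U) (hA : (G.induce (↑A : Set V)).Connected)
    {d : ℕ} (hd : ∀ v, G.dist v (near v) ≤ d) :
    A ⊆ voronoiCell near A ∧ (G.induce (↑(voronoiCell near A) : Set V)).Connected ∧
      fdiam G (voronoiCell near A) ≤ d + fdiam G A + d := by
  have hAS : A ⊆ voronoiCell near A := fun a ha => by
    rwa [mem_voronoiCell, (hnear a).eq hr (hG.isNearest_self (hAU ha))]
  refine ⟨hAS, connected_and_fdiam_le_of_forall_exists_walk hAS hA fun v hv => ?_⟩
  obtain ⟨p, hp⟩ := hG.exists_walk_length_eq_dist v (near v)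
  refine ⟨near v, mem_voronoiCell.1 hv, p, hp ▸ hd v, fun w hw => ?_⟩
  rwa [mem_voronoiCell, (hnear w).eq hr ((hnear v).of_mem_support hG hp hw), ← mem_voronoiCell]

end clusters

theorem stmt_12_general {V : Type} [Fintype V] [DecidableEq V] (G : SimpleGraph V)
    (hG : G.IsTree) (d : ℕ)
    (𝒯 : Finset (Finset V)) (hne : 𝒯.Nonempty)
    (hdisj : ∀ A ∈ 𝒯, ∀ B ∈ 𝒯, A ≠ B → Disjoint A B)
    (hconn : ∀ A ∈ 𝒯, (G.induce (↑A : Set V)).Connected)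
    (hdiam : ∀ A ∈ 𝒯, fdiam G A = d)
    (hmax : ∀ B : Finset V, (∀ A ∈ 𝒯, Disjoint A B) → B.Nonempty →
      (G.induce (↑B : Set V)).Connected → fdiam G B < d) :
    ∃ C : Finset V → Finset V,
      (∀ A ∈ 𝒯, A ⊆ C A ∧ (G.induce (↑(C A) : Set V)).Connected ∧
        fdiam G (C A) ≤ 3 * d + 2) ∧
      (∀ A ∈ 𝒯, ∀ B ∈ 𝒯, A ≠ B → Disjoint (C A) (C B)) ∧
      (∀ v : V, ∃ A ∈ 𝒯, v ∈ C A) := by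
  have hGc := hG.connected
  set U := 𝒯.biUnion id
  have hU : U.Nonempty := by
    obtain ⟨A, hA⟩ := hne
    obtain ⟨⟨a, ha⟩⟩ := (hconn A hA).nonempty
    exact ⟨a, Finset.mem_biUnion.2 ⟨A, hA, ha⟩⟩
  set r : V → ℕ := fun v => Fintype.equivFin V v
  have hr : r.Injective := Fin.val_injective.comp (Fintype.equivFin V).injective
  choose near hnear using exists_isNearest (G := G) (r := r) hU
  have hclose : ∀ v, G.dist v (near v) ≤ d := fun v => by
    obtain ⟨a, ha, had⟩ := exists_mem_dist_le_of_forall_fdiam_lt hGc hU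
      (fun B hB => hmax B ((Finset.disjoint_biUnion_left _ _ _).1 hB)) v
    exact ((hnear v).dist_le ha).trans had
  refine ⟨voronoiCell near, fun A hA => ?_, fun A hA B hB hAB => ?_, fun v => ?_⟩
  · obtain ⟨hAC, hCconn, hCdiam⟩ := connected_and_fdiam_voronoiCell_le (A := A) hGc hr hnear
      (Finset.subset_biUnion_of_mem id hA) (hconn A hA) hclose
    exact ⟨hAC, hCconn, by rw [hdiam A hA] at hCdiam; omega⟩
  · exact Finset.disjoint_left.2 fun v hvA hvB =>
      Finset.disjoint_left.1 (hdisj A hA B hB hAB) (mem_voronoiCell.1 hvA) (mem_voronoiCell.1 hvB)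
  · obtain ⟨A, hA, hvA⟩ := Finset.mem_biUnion.1 (hnear v).1
    exact ⟨A, hA, mem_voronoiCell.2 hvA⟩

/-- Let `T` be a tree with unit-weight edges and `𝒯` a maximal collection of
vertex-disjoint connected subtrees each of diameter `d` (so every remaining disjoint
connected piece has diameter `< d`).  Then each tree `A ∈ 𝒯` can be grown to a cluster
`C A ⊇ A` by absorbing adjacent leftover components (each assigned to exactly one
neighbor), so that each `C A` is connected with diameter at most `3d + 2`, the clusters
are pairwise disjoint, and together they partition the vertices of `T`. -/
theorem stmt_12 {V : Type} [Fintype V] [DecidableEq V] (G : SimpleGraph V)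
    (hG : G.IsTree) (d : ℕ) (hd : 1 ≤ d)
    (𝒯 : Finset (Finset V)) (hne : 𝒯.Nonempty)
    (hdisj : ∀ A ∈ 𝒯, ∀ B ∈ 𝒯, A ≠ B → Disjoint A B)
    (hconn : ∀ A ∈ 𝒯, (G.induce (↑A : Set V)).Connected)
    (hdiam : ∀ A ∈ 𝒯, fdiam G A = d)
    (hmax : ∀ B : Finset V, (∀ A ∈ 𝒯, Disjoint A B) → B.Nonempty →
      (G.induce (↑B : Set V)).Connected → fdiam G B < d) :
    ∃ C : Finset V → Finset V,
      (∀ A ∈ 𝒯, A ⊆ C A ∧ (G.induce (↑(C A) : Set V)).Connected ∧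
        fdiam G (C A) ≤ 3 * d + 2) ∧
      (∀ A ∈ 𝒯, ∀ B ∈ 𝒯, A ≠ B → Disjoint (C A) (C B)) ∧
      (∀ v : V, ∃ A ∈ 𝒯, v ∈ C A) :=
  stmt_12_general G hG d 𝒯 hne hdisj hconn hdiam hmax
end
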